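/- arXiv:1210.3882 — 3 statements merged into one kernel-verified Lean document; each statement's English description precedes it below -/
import Mathlib

section
/- Set u = (1,0) ∈ ℝ² and for 0 < μ < 1 define f_μ(q) = 1/|q| − μ/|q − (1−μ)u| − (1−μ)/|q + μu| for q ∈ ℝ² away from the two singularities. There exists an absolute constant C > 0 such that for every μ ∈ (0,1) and every q ∈ ℝ² with |q| ≥ 2, the gradient of f_μ satisfies |∇f_μ(q)| ≤ C μ / |q|⁴. -/
/-!
The gradient of `f_μ` at `q` is `-F(q) + μ F(q - (1-μ)u) + (1-μ) F(q + μu)` with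
`F(x) = x/|x|³`. Since `μ · (1-μ)u = (1-μ) · μu` (the center of mass is the origin), the
first-order Taylor terms of `F` at `q` cancel, and the gradient is
`μ R(-(1-μ)u) + (1-μ) R(μu)`, where `R(w) = F(q + w) - F(q) - DF(q) w`. On the ball of radius
`|q|/2` about `q` the derivative `DF` is Lipschitz with constant `O(|q|⁻⁴)`, so the mean value
inequality gives `|R(w)| = O(|w|²/|q|⁴)`, and the gradient is `O(μ(1-μ)/|q|⁴)`.
-/

open InnerProductSpace RealInnerProductSpace Metric

theorem Convex.norm_image_sub_sub_fderiv_le {E F : Type*} [NormedAddCommGroup E]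
    [NormedSpace ℝ E] [NormedAddCommGroup F] [NormedSpace ℝ F] {f : E → F}
    {f' : E → E →L[ℝ] F} {s : Set E} {x y : E} {L : ℝ} (hs : Convex ℝ s)
    (hf : ∀ z ∈ s, HasFDerivWithinAt f (f' z) s z) (hL : ∀ z ∈ s, ‖f' z - f' x‖ ≤ L * ‖z - x‖)
    (hx : x ∈ s) (hy : y ∈ s) :
    ‖f y - f x - f' x (y - x)‖ ≤ L * ‖y - x‖ ^ 2 := by
  obtain rfl | hxy := eq_or_ne y x
  · simp
  have hL0 : 0 ≤ L := nonneg_of_mul_nonneg_left ((norm_nonneg _).trans (hL y hy))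
    (norm_pos_iff.2 (sub_ne_zero.2 hxy))
  have hseg : segment ℝ x y ⊆ s := hs.segment_subset hx hy
  rw [sq, ← mul_assoc]
  refine (convex_segment x y).norm_image_sub_le_of_norm_hasFDerivWithin_le'
    (fun z hz => (hf z (hseg hz)).mono hseg) (fun z hz => ?_)
    (left_mem_segment ℝ x y) (right_mem_segment ℝ x y)
  exact (hL z (hseg hz)).trans (by gcongr; exact norm_sub_le_of_mem_segment hz)

theorem abs_inv_pow_sub_inv_pow_le {m r s : ℝ} (hm : 0 < m) (hr : m ≤ r) (hs : m ≤ s) (n : ℕ) :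
    |(r ^ n)⁻¹ - (s ^ n)⁻¹| ≤ n / m ^ (n + 1) * |r - s| := by
  wlog hrs : r ≤ s generalizing r s
  · rw [abs_sub_comm, abs_sub_comm r]
    exact this hs hr (le_of_not_ge hrs)
  obtain _ | k := n
  · simp
  have hr0 : 0 < r := hm.trans_le hr
  have hs0 : 0 < s := hm.trans_le hs
  have hdiff : |s ^ (k + 1) - r ^ (k + 1)| ≤ |r - s| * (k + 1) * s ^ k := by
    simpa [abs_sub_comm s r, abs_of_pos hr0, abs_of_pos hs0, hrs] using
      abs_pow_sub_pow_le s r (k + 1)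
  have hden : m ^ (k + 2) * s ^ k ≤ r ^ (k + 1) * s ^ (k + 1) :=
    calc m ^ (k + 2) * s ^ k = m ^ (k + 1) * (s ^ k * m) := by ring
      _ ≤ r ^ (k + 1) * (s ^ k * s) := by gcongr
      _ = r ^ (k + 1) * s ^ (k + 1) := by ring
  rw [inv_sub_inv (by positivity) (by positivity), abs_div,
    abs_of_pos (show 0 < r ^ (k + 1) * s ^ (k + 1) by positivity), div_le_iff₀ (by positivity)]
  calc |s ^ (k + 1) - r ^ (k + 1)| ≤ |r - s| * (k + 1) * s ^ k := hdiff
    _ = (k + 1) / m ^ (k + 2) * |r - s| * (m ^ (k + 2) * s ^ k) := by field_simp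
    _ ≤ _ := by push_cast; gcongr

variable {E : Type*} [NormedAddCommGroup E] [InnerProductSpace ℝ E]

theorem norm_inner_smul_sub_inner_smul_le (x y h : E) :
    ‖⟪x, h⟫ • x - ⟪y, h⟫ • y‖ ≤ (‖x‖ + ‖y‖) * ‖x - y‖ * ‖h‖ := by
  have hsplit : ⟪x, h⟫ • x - ⟪y, h⟫ • y = ⟪x - y, h⟫ • x + ⟪y, h⟫ • (x - y) := by
    rw [inner_sub_left]
    module
  rw [hsplit]
  refine (norm_add_le _ _).trans ?_
  rw [norm_smul, norm_smul, Real.norm_eq_abs, Real.norm_eq_abs]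
  nlinarith [abs_real_inner_le_norm (x - y) h, abs_real_inner_le_norm y h, norm_nonneg x,
    norm_nonneg (x - y), norm_nonneg y, norm_nonneg h]

theorem hasFDerivAt_norm {x : E} (hx : x ≠ 0) :
    HasFDerivAt (‖·‖) (‖x‖⁻¹ • innerSL ℝ x) x := by
  have h := (hasStrictFDerivAt_norm_sq x).hasFDerivAt.sqrt (by positivity)
  simp only [Real.sqrt_sq (norm_nonneg _)] at h
  refine h.congr_fderiv ?_
  ext v
  simp
  field_simp

theorem hasFDerivAt_inv_norm_pow (n : ℕ) {x : E} (hx : x ≠ 0) :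
    HasFDerivAt (fun p : E => (‖p‖ ^ n)⁻¹) (-(n * (‖x‖ ^ (n + 2))⁻¹) • innerSL ℝ x) x := by
  refine ((hasDerivAt_inv (by positivity)).comp_hasFDerivAt x
    ((hasFDerivAt_norm hx).pow n)).congr_fderiv ?_
  ext v
  obtain _ | k := n
  · simp
  · have : ‖x‖ ≠ 0 := by positivity
    simp
    field_simp
    ring

noncomputable def newtonField (x : E) : E := (‖x‖ ^ 3)⁻¹ • x

noncomputable def newtonFieldDeriv (x : E) : E →L[ℝ] E :=
  (‖x‖ ^ 3)⁻¹ • ContinuousLinearMap.id ℝ E - (3 * (‖x‖ ^ 5)⁻¹) • (innerSL ℝ x).smulRight x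

noncomputable def newtonFieldRemainder (q w : E) : E :=
  newtonField (q + w) - newtonField q - newtonFieldDeriv q w

theorem newtonFieldDeriv_apply (x h : E) :
    newtonFieldDeriv x h = (‖x‖ ^ 3)⁻¹ • h - (3 * (‖x‖ ^ 5)⁻¹ * ⟪x, h⟫) • x := by
  simp [newtonFieldDeriv, smul_smul]

theorem hasFDerivAt_newtonField {x : E} (hx : x ≠ 0) :
    HasFDerivAt newtonField (newtonFieldDeriv x) x := by
  refine ((hasFDerivAt_inv_norm_pow 3 hx).smul (hasFDerivAt_id x)).congr_fderiv ?_
  ext h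
  rw [newtonFieldDeriv_apply]
  simp [sub_eq_add_neg]

theorem HasFDerivAt.inv_norm {G : Type*} [NormedAddCommGroup G] [NormedSpace ℝ G] {f : G → E}
    {f' : G →L[ℝ] E} {x : G} (hf : HasFDerivAt f f' x) (h0 : f x ≠ 0) :
    HasFDerivAt (fun y => ‖f y‖⁻¹) (-(innerSL ℝ (newtonField (f x))).comp f') x := by
  have h := (hasFDerivAt_inv_norm_pow 1 h0).comp x hf
  simp only [pow_one] at h
  refine h.congr_fderiv ?_
  ext v
  simp [newtonField]

theorem norm_newtonFieldDeriv_sub_le {m : ℝ} (hm : 0 < m) {x y : E} (hx : m ≤ ‖x‖)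
    (hx' : ‖x‖ ≤ 3 * m) (hy : m ≤ ‖y‖) (hy' : ‖y‖ ≤ 3 * m) :
    ‖newtonFieldDeriv x - newtonFieldDeriv y‖ ≤ 156 / m ^ 4 * ‖x - y‖ := by
  have hnorm := abs_norm_sub_norm_le x y
  have h3 := (abs_inv_pow_sub_inv_pow_le hm hx hy 3).trans
    (mul_le_mul_of_nonneg_left hnorm (by positivity))
  have h5 := (abs_inv_pow_sub_inv_pow_le hm hx hy 5).trans
    (mul_le_mul_of_nonneg_left hnorm (by positivity))
  have hy0 : 0 < ‖y‖ := hm.trans_le hy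
  have hy5 : (‖y‖ ^ 5)⁻¹ ≤ (m ^ 5)⁻¹ := by gcongr
  refine ContinuousLinearMap.opNorm_le_bound _ (by positivity) fun h => ?_
  have hsplit : newtonFieldDeriv x h - newtonFieldDeriv y h
      = ((‖x‖ ^ 3)⁻¹ - (‖y‖ ^ 3)⁻¹) • h - (3 : ℝ) • ((((‖x‖ ^ 5)⁻¹ - (‖y‖ ^ 5)⁻¹) * ⟪x, h⟫) • x
        + (‖y‖ ^ 5)⁻¹ • (⟪x, h⟫ • x - ⟪y, h⟫ • y)) := by
    rw [newtonFieldDeriv_apply, newtonFieldDeriv_apply]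
    module
  have hxh : |⟪x, h⟫| ≤ 3 * m * ‖h‖ := (abs_real_inner_le_norm x h).trans (by gcongr)
  have hD := norm_inner_smul_sub_inner_smul_le x y h
  rw [sub_apply, hsplit]
  calc _ ≤ |(‖x‖ ^ 3)⁻¹ - (‖y‖ ^ 3)⁻¹| * ‖h‖ + 3 * (|(‖x‖ ^ 5)⁻¹ - (‖y‖ ^ 5)⁻¹| * |⟪x, h⟫| * ‖x‖
          + (‖y‖ ^ 5)⁻¹ * ‖⟪x, h⟫ • x - ⟪y, h⟫ • y‖) := by
        refine (norm_sub_le _ _).trans ?_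
        rw [norm_smul, norm_smul, Real.norm_eq_abs, Real.norm_of_nonneg zero_le_three]
        gcongr
        refine (norm_add_le _ _).trans ?_
        rw [norm_smul, norm_smul, Real.norm_eq_abs, Real.norm_eq_abs, abs_mul,
          abs_of_pos (by positivity : 0 < (‖y‖ ^ 5)⁻¹)]
    _ ≤ 3 / m ^ 4 * ‖x - y‖ * ‖h‖ + 3 * (5 / m ^ 6 * ‖x - y‖ * (3 * m * ‖h‖) * (3 * m)
          + (m ^ 5)⁻¹ * ((3 * m + 3 * m) * ‖x - y‖ * ‖h‖)) := by
        gcongr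
        · exact h3
        · exact h5
        · exact hD.trans (by gcongr)
    _ = 156 / m ^ 4 * ‖x - y‖ * ‖h‖ := by
        field_simp
        ring

theorem norm_newtonFieldRemainder_le {q w : E} (hw : ‖w‖ ≤ ‖q‖ / 2) :
    ‖newtonFieldRemainder q w‖ ≤ 2496 / ‖q‖ ^ 4 * ‖w‖ ^ 2 := by
  obtain rfl | hq := eq_or_ne q 0
  · simp_all [newtonFieldRemainder]
  set m := ‖q‖ / 2 with hm_def
  have hm : 0 < m := by positivity
  have hball : ∀ z ∈ closedBall q m, m ≤ ‖z‖ ∧ ‖z‖ ≤ 3 * m := fun z hz => by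
    rw [mem_closedBall, dist_eq_norm] at hz
    constructor <;> linarith [norm_sub_norm_le q z, norm_le_norm_add_norm_sub' z q, norm_sub_rev q z]
  have hne : ∀ z ∈ closedBall q m, z ≠ 0 := fun z hz =>
    ne_zero_of_norm_ne_zero (hm.trans_le (hball z hz).1).ne'
  have hq_mem : q ∈ closedBall q m := mem_closedBall_self hm.le
  have hqw_mem : q + w ∈ closedBall q m := by simpa [dist_eq_norm] using hw
  have h := (convex_closedBall q m).norm_image_sub_sub_fderiv_le
    (fun z hz => (hasFDerivAt_newtonField (hne z hz)).hasFDerivWithinAt)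
    (fun z hz => norm_newtonFieldDeriv_sub_le hm (hball z hz).1 (hball z hz).2
      (hball q hq_mem).1 (hball q hq_mem).2) hq_mem hqw_mem
  rw [add_sub_cancel_left] at h
  rw [newtonFieldRemainder]
  convert h using 2
  rw [hm_def]
  field_simp
  norm_num

noncomputable def perturbingPotential (μ : ℝ) (u p : E) : ℝ :=
  1 / ‖p‖ - μ / ‖p - (1 - μ) • u‖ - (1 - μ) / ‖p + μ • u‖

theorem hasGradientAt_perturbingPotential [CompleteSpace E] {μ : ℝ} {u q : E} (hq : q ≠ 0)
    (ha : q - (1 - μ) • u ≠ 0) (hb : q + μ • u ≠ 0) :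
    HasGradientAt (perturbingPotential μ u)
      (-newtonField q + μ • newtonField (q - (1 - μ) • u) + (1 - μ) • newtonField (q + μ • u)) q := by
  have h := (((hasFDerivAt_id q).inv_norm hq).sub
    ((((hasFDerivAt_id q).sub_const ((1 - μ) • u)).inv_norm ha).const_mul μ)).sub
    ((((hasFDerivAt_id q).add_const (μ • u)).inv_norm hb).const_mul (1 - μ))
  rw [hasGradientAt_iff_hasFDerivAt]
  refine (h.congr_fderiv ?_).congr_of_eventuallyEq (.of_forall fun p => ?_)
  · ext v
    simp
  · simp [perturbingPotential, div_eq_mul_inv]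

theorem newtonField_barycentric_sum_eq (μ : ℝ) (u q : E) :
    -newtonField q + μ • newtonField (q - (1 - μ) • u) + (1 - μ) • newtonField (q + μ • u)
      = μ • newtonFieldRemainder q (-((1 - μ) • u)) + (1 - μ) • newtonFieldRemainder q (μ • u) := by
  simp only [newtonFieldRemainder, map_neg, map_smul, ← sub_eq_add_neg]
  module

theorem norm_gradient_perturbingPotential_le [CompleteSpace E] {μ : ℝ} {u q : E} (hu : ‖u‖ = 1)
    (hμ0 : 0 ≤ μ) (hμ1 : μ ≤ 1) (hq : 2 ≤ ‖q‖) :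
    ‖gradient (perturbingPotential μ u) q‖ ≤ 2496 * μ / ‖q‖ ^ 4 := by
  have ha : ‖(1 - μ) • u‖ = 1 - μ := by
    rw [norm_smul, hu, mul_one, Real.norm_of_nonneg (by linarith)]
  have hb : ‖μ • u‖ = μ := by rw [norm_smul, hu, mul_one, Real.norm_of_nonneg hμ0]
  have hq0 : q ≠ 0 := norm_pos_iff.1 (by linarith)
  have hqa : q - (1 - μ) • u ≠ 0 := sub_ne_zero.2 fun h => by rw [h, ha] at hq; linarith
  have hqb : q + μ • u ≠ 0 := fun h => by
    rw [add_eq_zero_iff_eq_neg.1 h, norm_neg, hb] at hq; linarith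
  have hR₁ := norm_newtonFieldRemainder_le (q := q) (w := -((1 - μ) • u))
    (by rw [norm_neg, ha]; linarith)
  have hR₂ := norm_newtonFieldRemainder_le (q := q) (w := μ • u) (by rw [hb]; linarith)
  rw [norm_neg, ha] at hR₁
  rw [hb] at hR₂
  rw [(hasGradientAt_perturbingPotential hq0 hqa hqb).gradient, newtonField_barycentric_sum_eq]
  calc _ ≤ μ * (2496 / ‖q‖ ^ 4 * (1 - μ) ^ 2) + (1 - μ) * (2496 / ‖q‖ ^ 4 * μ ^ 2) := by
        refine (norm_add_le _ _).trans ?_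
        rw [norm_smul, norm_smul, Real.norm_of_nonneg hμ0, Real.norm_of_nonneg (by linarith)]
        gcongr
    _ = 2496 * μ / ‖q‖ ^ 4 * (1 - μ) := by ring
    _ ≤ 2496 * μ / ‖q‖ ^ 4 := mul_le_of_le_one_right (by positivity) (by linarith)

/-- **Gradient decay of the perturbing potential.**
With the primaries of masses `μ` and `1−μ` at `(1−μ)u` and `−μu` (`u = (1,0)`,
center of mass at the origin), the gradient of
`f_μ(q) = 1/|q| − μ/|q − (1−μ)u| − (1−μ)/|q + μu|` satisfies the uniform bound
`|∇f_μ(q)| ≤ Cμ/|q|⁴` for `|q| ≥ 2`, for an absolute constant `C`. -/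
theorem gradient_perturbing_potential_decay
    (u : EuclideanSpace ℝ (Fin 2)) (hu : u = EuclideanSpace.single (0 : Fin 2) (1 : ℝ)) :
    ∃ C : ℝ, 0 < C ∧
      ∀ μ : ℝ, 0 < μ → μ < 1 →
        ∀ q : EuclideanSpace ℝ (Fin 2), 2 ≤ ‖q‖ →
          ‖gradient (fun p : EuclideanSpace ℝ (Fin 2) =>
              1 / ‖p‖ - μ / ‖p - (1 - μ) • u‖ - (1 - μ) / ‖p + μ • u‖) q‖
            ≤ C * μ / ‖q‖ ^ 4 :=
  ⟨2496, by norm_num, fun _ hμ0 hμ1 _ hq =>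
    norm_gradient_perturbingPotential_le (by simp [hu]) hμ0.le hμ1.le hq⟩
end

section
/- Let L > 0 and ℓ ∈ ℝ, define e : (0, L) → (0, 1) by e(G) = √(1 − G²/L²), and suppose u : (0, L) → ℝ is differentiable and satisfies the Kepler equation u(G) − e(G)·sin u(G) = ℓ for all G ∈ (0, L). Then the function G ↦ L⁴(1 − e(G)·cos u(G))² is differentiable on (0, L) with derivative equal to 2L⁴·(e(G) − cos u(G))·e′(G), where e′(G) = −G/(L²·e(G)). -/
/-!
Differentiating the Kepler equation `u − e sin u = ℓ` at fixed `ℓ` gives `(1 − e cos u) u′ = e′ sin u`.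
In the derivative of `(1 − e cos u)²` the `u′`-term is `2 (1 − e cos u) e sin u · u′ = 2 e e′ sin² u`,
so `u′` drops out, and `sin² u + cos² u = 1` leaves `2 (e − cos u) e′`.
-/

open Real Filter Topology

noncomputable def eccentricity (L G : ℝ) : ℝ := √(1 - G ^ 2 / L ^ 2)

theorem hasDerivAt_eccentricity {L G : ℝ} (h : 1 - G ^ 2 / L ^ 2 ≠ 0) :
    HasDerivAt (eccentricity L) (-G / (L ^ 2 * eccentricity L G)) G := by
  have hinner : HasDerivAt (fun G' : ℝ => 1 - G' ^ 2 / L ^ 2) (-(2 * G) / L ^ 2) G :=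
    (((hasDerivAt_pow 2 G).div_const (L ^ 2)).const_sub 1).congr_deriv (by ring)
  refine (hinner.sqrt h).congr_deriv ?_
  rw [eccentricity]
  field_simp

section Kepler

variable {e u : ℝ → ℝ} {e' u' ℓ G : ℝ}

theorem one_sub_mul_cos_mul_deriv_of_kepler (he : HasDerivAt e e' G) (hu : HasDerivAt u u' G)
    (hkepler : ∀ᶠ G' in 𝓝 G, u G' - e G' * sin (u G') = ℓ) :
    (1 - e G * cos (u G)) * u' = e' * sin (u G) := by
  have hzero : HasDerivAt (fun G' => u G' - e G' * sin (u G')) 0 G :=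
    (hasDerivAt_const G ℓ).congr_of_eventuallyEq hkepler
  have hdiff : HasDerivAt (fun G' => u G' - e G' * sin (u G'))
      (u' - (e' * sin (u G) + e G * (cos (u G) * u'))) G :=
    hu.sub (he.mul hu.sin)
  linear_combination hdiff.unique hzero

theorem hasDerivAt_sq_one_sub_mul_cos_of_kepler (he : HasDerivAt e e' G)
    (hu : HasDerivAt u u' G) (hkepler : ∀ᶠ G' in 𝓝 G, u G' - e G' * sin (u G') = ℓ) :
    HasDerivAt (fun G' => (1 - e G' * cos (u G')) ^ 2) (2 * (e G - cos (u G)) * e') G := by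
  have hu' := one_sub_mul_cos_mul_deriv_of_kepler he hu hkepler
  refine (((he.mul hu.cos).const_sub 1).pow 2).congr_deriv ?_
  simp only [Pi.mul_apply]
  linear_combination (2 * e G * sin (u G)) * hu' + (2 * e G * e') * sin_sq_add_cos_sq (u G)

end Kepler

theorem deriv_squared_radius_delaunay_general (L : ℝ) (ℓ : ℝ)
    (u : ℝ → ℝ)
    (hu : ∀ G ∈ Set.Ioo (0 : ℝ) L, DifferentiableAt ℝ u G)
    (hkepler : ∀ G ∈ Set.Ioo (0 : ℝ) L,
      u G - Real.sqrt (1 - G ^ 2 / L ^ 2) * Real.sin (u G) = ℓ) :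
    ∀ G ∈ Set.Ioo (0 : ℝ) L,
      HasDerivAt
        (fun G' : ℝ => L ^ 4 * (1 - Real.sqrt (1 - G' ^ 2 / L ^ 2) * Real.cos (u G')) ^ 2)
        (2 * L ^ 4 * (Real.sqrt (1 - G ^ 2 / L ^ 2) - Real.cos (u G)) *
          (-G / (L ^ 2 * Real.sqrt (1 - G ^ 2 / L ^ 2)))) G := by
  intro G hG
  have hL : 0 < L := hG.1.trans hG.2
  have hradicand : 0 < 1 - G ^ 2 / L ^ 2 := by
    rw [sub_pos, div_lt_one (by positivity)]
    nlinarith [hG.1, hG.2]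
  have hkepler_near : ∀ᶠ G' in 𝓝 G, u G' - eccentricity L G' * sin (u G') = ℓ :=
    eventually_of_mem (isOpen_Ioo.mem_nhds hG) hkepler
  exact ((hasDerivAt_sq_one_sub_mul_cos_of_kepler (hasDerivAt_eccentricity hradicand.ne')
    (hu G hG).hasDerivAt hkepler_near).const_mul (L ^ 4)).congr_deriv (by rw [eccentricity]; ring)

/-- **Derivative of the squared radius with respect to the angular momentum.**
In Delaunay coordinates, let `e(G) = √(1 − G²/L²)` and let the eccentric anomaly
`u(G)` solve the Kepler equation `u − e sin u = ℓ`.  Then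
`G ↦ L⁴(1 − e(G) cos u(G))²` (the squared radius `|q|²`) is differentiable on
`(0, L)` with derivative `2L⁴(e(G) − cos u(G))·e′(G)`, where `e′(G) = −G/(L²e(G))`. -/
theorem deriv_squared_radius_delaunay (L : ℝ) (hL : 0 < L) (ℓ : ℝ)
    (u : ℝ → ℝ)
    (hu : ∀ G ∈ Set.Ioo (0 : ℝ) L, DifferentiableAt ℝ u G)
    (hkepler : ∀ G ∈ Set.Ioo (0 : ℝ) L,
      u G - Real.sqrt (1 - G ^ 2 / L ^ 2) * Real.sin (u G) = ℓ) :
    ∀ G ∈ Set.Ioo (0 : ℝ) L,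
      HasDerivAt
        (fun G' : ℝ => L ^ 4 * (1 - Real.sqrt (1 - G' ^ 2 / L ^ 2) * Real.cos (u G')) ^ 2)
        (2 * L ^ 4 * (Real.sqrt (1 - G ^ 2 / L ^ 2) - Real.cos (u G)) *
          (-G / (L ^ 2 * Real.sqrt (1 - G ^ 2 / L ^ 2)))) G :=
  deriv_squared_radius_delaunay_general L ℓ u hu hkepler
end

section
/- For every real number e with |e| < 1, ∫₀^{2π} (e − cos u)·(1 − e·cos u)^{−4} du = −2πe·(1 − e²)^{−5/2}. Consequently this integral, as a function of e, is real-analytic on (−1, 1) and vanishes only at e = 0. -/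
open Real intervalIntegral

/-!
Up to a multiple of `1 / (1 - e cos u)`, the integrand is an exact derivative:
`sin u` times a rational function of `1 - e cos u` is a primitive of
`(e - cos u) / (1 - e cos u)⁴ + e (1 - e²)⁻² / (1 - e cos u)`, and it vanishes at `0` and `2π`.
The remaining term is integrated through the true anomaly `f` of the Kepler ellipse, for which
`df/du = √(1 - e²) / (1 - e cos u)` and `f` advances by `2π` over a period, so that
`∫₀^{2π} du / (1 - e cos u) = 2π / √(1 - e²)`. The resulting closed form is analytic on `(-1, 1)`
and vanishes only at `e = 0`.
-/

lemma one_sub_mul_cos_pos {e : ℝ} (he : |e| < 1) (u : ℝ) : 0 < 1 - e * cos u := by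
  have : |e * cos u| < 1 := by
    rw [abs_mul]
    exact (mul_le_of_le_one_right (abs_nonneg e) (abs_cos_le_one u)).trans_lt he
  linarith [le_abs_self (e * cos u)]

lemma one_sub_sq_pos_of_abs_lt_one {e : ℝ} (he : |e| < 1) : 0 < 1 - e ^ 2 :=
  sub_pos.2 (sq_lt_one_iff_abs_lt_one e |>.2 he)

lemma rpow_neg_five_div_two {x : ℝ} (hx : 0 ≤ x) : x ^ (-(5 : ℝ) / 2) = (x ^ 2 * √x)⁻¹ := by
  rw [neg_div, rpow_neg hx, show (5 : ℝ) / 2 = 2 + 1 / 2 by norm_num,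
    rpow_add' hx (by norm_num), rpow_two, sqrt_eq_rpow]

noncomputable def trueAnomaly (e u : ℝ) : ℝ :=
  u + 2 * arctan (e * sin u / (1 + √(1 - e ^ 2) - e * cos u))

lemma hasDerivAt_trueAnomaly {e : ℝ} (he : |e| < 1) (u : ℝ) :
    HasDerivAt (trueAnomaly e) (√(1 - e ^ 2) / (1 - e * cos u)) u := by
  have hD := one_sub_mul_cos_pos he u
  have hσ : √(1 - e ^ 2) ^ 2 = 1 - e ^ 2 :=
    sq_sqrt (one_sub_sq_pos_of_abs_lt_one he).le
  have hΔ : 0 < 1 + √(1 - e ^ 2) - e * cos u := by linarith [sqrt_nonneg (1 - e ^ 2)]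
  refine ((hasDerivAt_id u).add ((((hasDerivAt_sin u).const_mul e).div
    (((hasDerivAt_cos u).const_mul e).const_sub _) hΔ.ne').arctan.const_mul 2)).congr_deriv ?_
  have := sin_sq_add_cos_sq u
  simp only [Pi.div_apply]
  field_simp
  linear_combination (e ^ 3 * cos u - √(1 - e ^ 2) * e ^ 2 - e ^ 2) * this +
    (e * cos u - 1 - √(1 - e ^ 2)) * hσ

lemma integral_inv_one_sub_mul_cos {e : ℝ} (he : |e| < 1) :
    ∫ u in (0 : ℝ)..(2 * π), (1 - e * cos u)⁻¹ = 2 * π / √(1 - e ^ 2) := by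
  have hσ : 0 < √(1 - e ^ 2) := sqrt_pos.2 (one_sub_sq_pos_of_abs_lt_one he)
  have hD : ∀ u, 1 - e * cos u ≠ 0 := fun u ↦ (one_sub_mul_cos_pos he u).ne'
  have hFTC : ∫ u in (0 : ℝ)..(2 * π), √(1 - e ^ 2) / (1 - e * cos u) = 2 * π := by
    rw [integral_eq_sub_of_hasDerivAt (fun u _ ↦ hasDerivAt_trueAnomaly he u)
      (by apply Continuous.intervalIntegrable; fun_prop (disch := exact hD))]
    simp [trueAnomaly]
  simp_rw [div_eq_mul_inv, intervalIntegral.integral_const_mul] at hFTC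
  rw [eq_div_iff hσ.ne', mul_comm]
  exact hFTC

noncomputable def rationalPrimitive (e u : ℝ) : ℝ :=
  -sin u / 3 * (1 / (1 - e * cos u) ^ 3 + 1 / ((1 - e ^ 2) * (1 - e * cos u) ^ 2)
    + (1 + 2 * e ^ 2) / ((1 - e ^ 2) ^ 2 * (1 - e * cos u)))

lemma hasDerivAt_rationalPrimitive {e u : ℝ} (he : 1 - e ^ 2 ≠ 0) (hD : 1 - e * cos u ≠ 0) :
    HasDerivAt (rationalPrimitive e)
      ((e - cos u) / (1 - e * cos u) ^ 4 + e / (1 - e ^ 2) ^ 2 * (1 - e * cos u)⁻¹) u := by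
  have hd : HasDerivAt (fun u ↦ 1 - e * cos u) (e * sin u) u := by
    simpa using ((hasDerivAt_cos u).const_mul e).const_sub 1
  refine (((hasDerivAt_sin u).neg.div_const 3).mul ((((hasDerivAt_const u 1).div (hd.pow 3)
    (pow_ne_zero _ hD)).add ((hasDerivAt_const u 1).div ((hd.pow 2).const_mul (1 - e ^ 2))
    (mul_ne_zero he (pow_ne_zero _ hD)))).add ((hasDerivAt_const u (1 + 2 * e ^ 2)).div
    (hd.const_mul ((1 - e ^ 2) ^ 2)) (mul_ne_zero (pow_ne_zero _ he) hD)))).congr_deriv ?_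
  norm_num only [Pi.div_apply, Pi.add_apply, Pi.neg_apply, Pi.pow_apply]
  field_simp
  congr 1
  ring_nf
  rw [sin_sq]
  ring

lemma integral_quadrupole {e : ℝ} (he : |e| < 1) :
    ∫ u in (0 : ℝ)..(2 * π), (e - cos u) / (1 - e * cos u) ^ 4
      = -2 * π * e * (1 - e ^ 2) ^ (-(5 : ℝ) / 2) := by
  have he2 : 0 < 1 - e ^ 2 := one_sub_sq_pos_of_abs_lt_one he
  have hD : ∀ u, 1 - e * cos u ≠ 0 := fun u ↦ (one_sub_mul_cos_pos he u).ne'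
  have hI₁ : IntervalIntegrable (fun u ↦ (e - cos u) / (1 - e * cos u) ^ 4)
      MeasureTheory.volume 0 (2 * π) := by
    apply Continuous.intervalIntegrable; fun_prop (disch := simp [hD])
  have hI₂ : IntervalIntegrable (fun u ↦ e / (1 - e ^ 2) ^ 2 * (1 - e * cos u)⁻¹)
      MeasureTheory.volume 0 (2 * π) := by
    apply Continuous.intervalIntegrable; fun_prop (disch := exact hD)
  have hFTC : ∫ u in (0 : ℝ)..(2 * π),
      ((e - cos u) / (1 - e * cos u) ^ 4 + e / (1 - e ^ 2) ^ 2 * (1 - e * cos u)⁻¹) = 0 := by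
    rw [integral_eq_sub_of_hasDerivAt
      (fun u _ ↦ hasDerivAt_rationalPrimitive he2.ne' (hD u)) (hI₁.add hI₂)]
    simp [rationalPrimitive]
  rw [integral_add hI₁ hI₂, integral_const_mul, integral_inv_one_sub_mul_cos he] at hFTC
  rw [eq_neg_of_add_eq_zero_left hFTC, rpow_neg_five_div_two he2.le]
  field_simp

/-- **The averaged quadrupole integral.**
For `|e| < 1`, `∫₀^{2π} (e − cos u)(1 − e cos u)^{−4} du = −2πe(1 − e²)^{−5/2}`;
consequently, as a function of `e`, the integral is real-analytic on `(−1, 1)`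
and vanishes only at `e = 0`. -/
theorem averaged_quadrupole_integral :
    (∀ e : ℝ, |e| < 1 →
      (∫ u in (0 : ℝ)..(2 * π), (e - Real.cos u) / (1 - e * Real.cos u) ^ 4)
        = -2 * π * e * (1 - e ^ 2) ^ (-(5 : ℝ) / 2)) ∧
    AnalyticOnNhd ℝ
      (fun e : ℝ => ∫ u in (0 : ℝ)..(2 * π), (e - Real.cos u) / (1 - e * Real.cos u) ^ 4)
      (Set.Ioo (-1 : ℝ) 1) ∧
    ∀ e ∈ Set.Ioo (-1 : ℝ) 1,
      ((∫ u in (0 : ℝ)..(2 * π), (e - Real.cos u) / (1 - e * Real.cos u) ^ 4) = 0 ↔ e = 0) := by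
  refine ⟨fun e he ↦ integral_quadrupole he, ?_, fun e he ↦ ?_⟩
  · have hclosed : AnalyticOnNhd ℝ (fun e : ℝ ↦ -2 * π * e * (1 - e ^ 2) ^ (-(5 : ℝ) / 2))
        (Set.Ioo (-1) 1) := fun e he ↦ by
      have : 1 - e ^ 2 ≠ 0 := (one_sub_sq_pos_of_abs_lt_one (abs_lt.2 he)).ne'
      exact ContDiffAt.analyticAt (by fun_prop (disch := assumption))
    exact hclosed.congr isOpen_Ioo fun e he ↦ (integral_quadrupole (abs_lt.2 he)).symm
  · rw [integral_quadrupole (abs_lt.2 he)]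
    simp [pi_ne_zero, (rpow_pos_of_pos (one_sub_sq_pos_of_abs_lt_one (abs_lt.2 he)) _).ne']
end
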